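/- The positive Boolean closure of the universal fragment of HyperLTL collapses: every formula of PBC(∀*HyperLTL) — i.e., a finite positive Boolean combination (∧,∨) of universally quantified HyperLTL formulas ∀π₁⋯∀πₙ φ with φ quantifier-free — is equivalent over all teams to a single ∀*HyperLTL formula. -/

import Mathlib

/-- A trace over `AP`: an infinite sequence of sets of atomic propositions. -/
def Trace (AP : Type) := ℕ → Set AP

/-- The suffix `t[i,∞]` of a trace. -/
def Trace.shift {AP : Type} (t : Trace AP) (i : ℕ) : Trace AP := fun n => t (n + i)

/-- `T[f,∞] = {t[s,∞] | t ∈ T, s ∈ f(t)}`. -/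
def teamShift {AP : Type} (T : Set (Trace AP)) (f : Trace AP → Set ℕ) : Set (Trace AP) :=
  {s | ∃ t ∈ T, ∃ i ∈ f t, s = t.shift i}

/-- `f : T → 𝒫(ℕ)⁺`: assigns a nonempty set of time steps to every trace of the team. -/
def goodF {AP : Type} (T : Set (Trace AP)) (f : Trace AP → Set ℕ) : Prop :=
  ∀ t ∈ T, (f t).Nonempty

/-- The ordering `f' < f` on choice functions (on the domain `T'`). -/
def fLT {AP : Type} (T' : Set (Trace AP)) (f' f : Trace AP → Set ℕ) : Prop :=
  ∀ t ∈ T', sInf (f' t) ≤ sInf (f t) ∧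
    ∀ m, IsGreatest (f t) m → ∃ m', IsGreatest (f' t) m' ∧ m' < m

/-- Formulas of (NNF) LTL, extended with the Boolean disjunction `boolOr` (⊕)
and the Boolean negation `bNeg` (∼). -/
inductive TForm (AP : Type) where
  | pos : AP → TForm AP
  | neg : AP → TForm AP
  | and : TForm AP → TForm AP → TForm AP
  | or : TForm AP → TForm AP → TForm AP
  | boolOr : TForm AP → TForm AP → TForm AP
  | bNeg : TForm AP → TForm AP
  | next : TForm AP → TForm AP
  | glob : TForm AP → TForm AP
  | untl : TForm AP → TForm AP → TForm AP

/-- Plain LTL formulas (negation normal form; no ⊕, no ∼). -/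
def TForm.isLTL {AP : Type} : TForm AP → Prop
  | .pos _ => True
  | .neg _ => True
  | .and φ ψ => φ.isLTL ∧ ψ.isLTL
  | .or φ ψ => φ.isLTL ∧ ψ.isLTL
  | .boolOr _ _ => False
  | .bNeg _ => False
  | .next φ => φ.isLTL
  | .glob φ => φ.isLTL
  | .untl φ ψ => φ.isLTL ∧ ψ.isLTL

/-- TeamLTL(⊕) formulas: no Boolean negation. -/
def TForm.noBNeg {AP : Type} : TForm AP → Prop
  | .pos _ => True
  | .neg _ => True
  | .and φ ψ => φ.noBNeg ∧ ψ.noBNeg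
  | .or φ ψ => φ.noBNeg ∧ ψ.noBNeg
  | .boolOr φ ψ => φ.noBNeg ∧ ψ.noBNeg
  | .bNeg _ => False
  | .next φ => φ.noBNeg
  | .glob φ => φ.noBNeg
  | .untl φ ψ => φ.noBNeg ∧ ψ.noBNeg

/-- Ordinary single-trace LTL satisfaction (⊕ read as ∨ and ∼ as ¬). -/
def TForm.sat {AP : Type} : Trace AP → TForm AP → Prop
  | t, .pos p => p ∈ t 0
  | t, .neg p => p ∉ t 0
  | t, .and φ ψ => TForm.sat t φ ∧ TForm.sat t ψ
  | t, .or φ ψ => TForm.sat t φ ∨ TForm.sat t ψ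
  | t, .boolOr φ ψ => TForm.sat t φ ∨ TForm.sat t ψ
  | t, .bNeg φ => ¬ TForm.sat t φ
  | t, .next φ => TForm.sat (t.shift 1) φ
  | t, .glob φ => ∀ i, TForm.sat (t.shift i) φ
  | t, .untl φ ψ => ∃ i, TForm.sat (t.shift i) ψ ∧ ∀ j < i, TForm.sat (t.shift j) φ

/-- Lax team semantics of TeamLTL(⊕,∼). -/
def TForm.teamSat {AP : Type} : Set (Trace AP) → TForm AP → Prop
  | T, .pos p => ∀ t ∈ T, p ∈ t 0
  | T, .neg p => ∀ t ∈ T, p ∉ t 0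
  | T, .and φ ψ => TForm.teamSat T φ ∧ TForm.teamSat T ψ
  | T, .or φ ψ => ∃ T₁ T₂, T₁ ∪ T₂ = T ∧ TForm.teamSat T₁ φ ∧ TForm.teamSat T₂ ψ
  | T, .boolOr φ ψ => TForm.teamSat T φ ∨ TForm.teamSat T ψ
  | T, .bNeg φ => ¬ TForm.teamSat T φ
  | T, .next φ => TForm.teamSat (teamShift T (fun _ => {1})) φ
  | T, .glob φ => ∀ f, goodF T f → TForm.teamSat (teamShift T f) φ
  | T, .untl φ ψ => ∃ f, goodF T f ∧ TForm.teamSat (teamShift T f) ψ ∧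
      ∀ f', goodF {t ∈ T | ¬ IsGreatest (f t) 0} f' →
        fLT {t ∈ T | ¬ IsGreatest (f t) 0} f' f →
        ({t ∈ T | ¬ IsGreatest (f t) 0} = (∅ : Set (Trace AP)) ∨
          TForm.teamSat (teamShift {t ∈ T | ¬ IsGreatest (f t) 0} f') φ)

/-- HyperLTL formulas (quantifiers may occur anywhere). -/
inductive HForm (AP V : Type) where
  | atom : AP → V → HForm AP V
  | hnot : HForm AP V → HForm AP V
  | hand : HForm AP V → HForm AP V → HForm AP V
  | hor : HForm AP V → HForm AP V → HForm AP V
  | hnext : HForm AP V → HForm AP V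
  | hglob : HForm AP V → HForm AP V
  | huntl : HForm AP V → HForm AP V → HForm AP V
  | hall : V → HForm AP V → HForm AP V
  | hex : V → HForm AP V → HForm AP V

/-- Shift a trace assignment: `Π[i,∞]`. -/
def shiftA {AP V : Type} (A : V → Trace AP) (i : ℕ) : V → Trace AP := fun v => (A v).shift i

/-- HyperLTL satisfaction `Π ⊨_T φ`. -/
def HForm.hsat {AP V : Type} [DecidableEq V] :
    (V → Trace AP) → Set (Trace AP) → HForm AP V → Prop
  | A, _, .atom a v => a ∈ A v 0
  | A, T, .hnot φ => ¬ HForm.hsat A T φ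
  | A, T, .hand φ ψ => HForm.hsat A T φ ∧ HForm.hsat A T ψ
  | A, T, .hor φ ψ => HForm.hsat A T φ ∨ HForm.hsat A T ψ
  | A, T, .hnext φ => HForm.hsat (shiftA A 1) T φ
  | A, T, .hglob φ => ∀ i, HForm.hsat (shiftA A i) T φ
  | A, T, .huntl φ ψ => ∃ i, HForm.hsat (shiftA A i) T ψ ∧
      ∀ j < i, HForm.hsat (shiftA A j) T φ
  | A, T, .hall v φ => ∀ t ∈ T, HForm.hsat (Function.update A v t) T φ
  | A, T, .hex v φ => ∃ t ∈ T, HForm.hsat (Function.update A v t) T φ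

/-- Quantifier-free HyperLTL formulas. -/
def HForm.QFree {AP V : Type} : HForm AP V → Prop
  | .atom _ _ => True
  | .hnot φ => φ.QFree
  | .hand φ ψ => φ.QFree ∧ ψ.QFree
  | .hor φ ψ => φ.QFree ∧ ψ.QFree
  | .hnext φ => φ.QFree
  | .hglob φ => φ.QFree
  | .huntl φ ψ => φ.QFree ∧ ψ.QFree
  | .hall _ _ => False
  | .hex _ _ => False

/-- All trace variables occurring in a HyperLTL formula. -/
def HForm.vars {AP V : Type} : HForm AP V → Set V
  | .atom _ v => {v}
  | .hnot φ => φ.vars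
  | .hand φ ψ => φ.vars ∪ ψ.vars
  | .hor φ ψ => φ.vars ∪ ψ.vars
  | .hnext φ => φ.vars
  | .hglob φ => φ.vars
  | .huntl φ ψ => φ.vars ∪ ψ.vars
  | .hall v φ => insert v φ.vars
  | .hex v φ => insert v φ.vars

/-- Free trace variables of a HyperLTL formula. -/
def HForm.free {AP V : Type} : HForm AP V → Set V
  | .atom _ v => {v}
  | .hnot φ => φ.free
  | .hand φ ψ => φ.free ∪ ψ.free
  | .hor φ ψ => φ.free ∪ ψ.free
  | .hnext φ => φ.free
  | .hglob φ => φ.free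
  | .huntl φ ψ => φ.free ∪ ψ.free
  | .hall v φ => φ.free \ {v}
  | .hex v φ => φ.free \ {v}

/-- Rename the trace variables of a HyperLTL formula. -/
def HForm.rename {AP V : Type} (ρ : V → V) : HForm AP V → HForm AP V
  | .atom a v => .atom a (ρ v)
  | .hnot φ => .hnot (φ.rename ρ)
  | .hand φ ψ => .hand (φ.rename ρ) (ψ.rename ρ)
  | .hor φ ψ => .hor (φ.rename ρ) (ψ.rename ρ)
  | .hnext φ => .hnext (φ.rename ρ)
  | .hglob φ => .hglob (φ.rename ρ)
  | .huntl φ ψ => .huntl (φ.rename ρ) (ψ.rename ρ)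
  | .hall v φ => .hall (ρ v) (φ.rename ρ)
  | .hex v φ => .hex (ρ v) (φ.rename ρ)

/-- Hyperification `φ ↦ φ(π)`: replace each proposition `p` by `p_π`. -/
def TForm.hyperify {AP V : Type} (π : V) : TForm AP → HForm AP V
  | .pos p => .atom p π
  | .neg p => .hnot (.atom p π)
  | .and φ ψ => .hand (φ.hyperify π) (ψ.hyperify π)
  | .or φ ψ => .hor (φ.hyperify π) (ψ.hyperify π)
  | .boolOr φ ψ => .hor (φ.hyperify π) (ψ.hyperify π)
  | .bNeg φ => .hnot (φ.hyperify π)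
  | .next φ => .hnext (φ.hyperify π)
  | .glob φ => .hglob (φ.hyperify π)
  | .untl φ ψ => .huntl (φ.hyperify π) (ψ.hyperify π)

/-- A tautological NNF LTL formula. -/
def TForm.verum {AP : Type} [Inhabited AP] : TForm AP := .or (.pos default) (.neg default)

/-- Negation normal form of the (classical) negation of an NNF LTL formula. -/
def TForm.dual {AP : Type} [Inhabited AP] : TForm AP → TForm AP
  | .pos p => .neg p
  | .neg p => .pos p
  | .and φ ψ => .or φ.dual ψ.dual
  | .or φ ψ => .and φ.dual ψ.dual
  | .boolOr φ ψ => .and φ.dual ψ.dual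
  | .bNeg φ => φ
  | .next φ => .next φ.dual
  | .glob φ => .untl TForm.verum φ.dual
  | .untl φ ψ => .or (.glob ψ.dual) (.untl ψ.dual (.and φ.dual ψ.dual))

/-- The shorthand `∃β := ∼β^d`. -/
def TForm.tExists {AP : Type} [Inhabited AP] (β : TForm AP) : TForm AP := .bNeg β.dual

mutual
/-- Erase trace-variable subscripts: turn a quantifier-free HyperLTL formula into
an (NNF) LTL formula, pushing classical negations inward. -/
def deH {AP V : Type} [Inhabited AP] : HForm AP V → TForm AP
  | .atom a _ => .pos a
  | .hnot φ => deHn φ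
  | .hand φ ψ => .and (deH φ) (deH ψ)
  | .hor φ ψ => .or (deH φ) (deH ψ)
  | .hnext φ => .next (deH φ)
  | .hglob φ => .glob (deH φ)
  | .huntl φ ψ => .untl (deH φ) (deH ψ)
  | .hall _ φ => deH φ
  | .hex _ φ => deH φ

/-- NNF of the negation of an erased quantifier-free HyperLTL formula. -/
def deHn {AP V : Type} [Inhabited AP] : HForm AP V → TForm AP
  | .atom a _ => .neg a
  | .hnot φ => deH φ
  | .hand φ ψ => .or (deHn φ) (deHn ψ)
  | .hor φ ψ => .and (deHn φ) (deHn ψ)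
  | .hnext φ => .next (deHn φ)
  | .hglob φ => .untl TForm.verum (deHn φ)
  | .huntl φ ψ => .or (.glob (deHn ψ)) (.untl (deHn ψ) (.and (deHn φ) (deHn ψ)))
  | .hall _ φ => deHn φ
  | .hex _ φ => deHn φ
end

/-- `φ₀ ∨ φ₁ ∨ ⋯ ∨ φₘ` for a nonempty family of HyperLTL formulas. -/
def HForm.bigOrF {AP V : Type} {m : ℕ} (f : Fin (m + 1) → HForm AP V) : HForm AP V :=
  (List.ofFn fun i : Fin m => f i.succ).foldr .hor (f 0)

/-- `φ₀ ∧ φ₁ ∧ ⋯ ∧ φₘ` for a nonempty family of HyperLTL formulas. -/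
def HForm.bigAndF {AP V : Type} {m : ℕ} (f : Fin (m + 1) → HForm AP V) : HForm AP V :=
  (List.ofFn fun i : Fin m => f i.succ).foldr .hand (f 0)

/-- `φ₀ ⊕ φ₁ ⊕ ⋯ ⊕ φₘ` for a nonempty family of team formulas. -/
def TForm.bigBoolOrF {AP : Type} {m : ℕ} (f : Fin (m + 1) → TForm AP) : TForm AP :=
  (List.ofFn fun i : Fin m => f i.succ).foldr .boolOr (f 0)

/-- `φ₀ ∧ φ₁ ∧ ⋯ ∧ φₘ` for a nonempty family of team formulas. -/
def TForm.bigAndF {AP : Type} {m : ℕ} (f : Fin (m + 1) → TForm AP) : TForm AP :=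
  (List.ofFn fun i : Fin m => f i.succ).foldr .and (f 0)

/-- Apply a quantifier block (`true` = ∀, `false` = ∃). -/
def applyBlock {AP V : Type} (qs : List (Bool × V)) (φ : HForm AP V) : HForm AP V :=
  qs.foldr (fun q acc => if q.1 then .hall q.2 acc else .hex q.2 acc) φ

/-- The dual of a quantifier block. -/
def dualBlock {V : Type} (qs : List (Bool × V)) : List (Bool × V) :=
  qs.map fun q => (!q.1, q.2)

/-- The positive Boolean closure of a logic, over base formulas. -/
inductive PBCform (AP V : Type) where
  | base : HForm AP V → PBCform AP V
  | pand : PBCform AP V → PBCform AP V → PBCform AP V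
  | por : PBCform AP V → PBCform AP V → PBCform AP V

/-- Semantics of the positive Boolean closure. -/
def PBCform.sat {AP V : Type} [DecidableEq V] (A : V → Trace AP)
    (T : Set (Trace AP)) : PBCform AP V → Prop
  | .base f => HForm.hsat A T f
  | .pand f g => f.sat A T ∧ g.sat A T
  | .por f g => f.sat A T ∨ g.sat A T

/-- The base formulas occurring in a positive Boolean combination. -/
def PBCform.bases {AP V : Type} : PBCform AP V → Set (HForm AP V)
  | .base f => {f}
  | .pand f g => f.bases ∪ g.bases
  | .por f g => f.bases ∪ g.bases

/-- A `∀*HyperLTL` sentence: a block of universal quantifiers in front of a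
quantifier-free formula, with no free trace variables. -/
def IsUnivSentence {AP V : Type} (f : HForm AP V) : Prop :=
  (∃ (l : List V) (ψ : HForm AP V), ψ.QFree ∧ f = l.foldr .hall ψ) ∧ f.free = ∅

/-!
On a team `T`, a sentence `∀ l. ψ` with `ψ` quantifier-free and all free variables of `ψ` in `l`
says that `ψ` holds under every assignment of traces of `T` to the trace variables. Conjunction
commutes with this universal closure. For a disjunction, rename the variables of one disjunct
apart from those of the other (there are infinitely many trace variables); then
`(∀π. ψ₁ π) ∨ (∀π'. ψ₂ π')` is equivalent to `∀π π'. ψ₁ π ∨ ψ₂ π'`, because counterexamples to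
the two disjuncts live on disjoint variables and glue into one counterexample. Closing the
resulting quantifier-free formula universally over its finitely many free variables gives the
∀*HyperLTL sentence.
-/

theorem Set.EqOn.update_of_sdiff {α β : Type*} [DecidableEq α] {f g : α → β} {s : Set α}
    {a : α} (h : Set.EqOn f g (s \ {a})) (b : β) :
    Set.EqOn (Function.update f a b) (Function.update g a b) s := by
  intro x hx
  rcases eq_or_ne x a with rfl | hxa
  · simp
  · simp [Function.update_of_ne hxa, h ⟨hx, hxa⟩]

namespace HForm

variable {AP V : Type}

theorem free_finite (φ : HForm AP V) : φ.free.Finite := by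
  induction φ with
  | atom => exact Set.finite_singleton _
  | hnot _ ih | hnext _ ih | hglob _ ih => exact ih
  | hand _ _ ih₁ ih₂ | hor _ _ ih₁ ih₂ | huntl _ _ ih₁ ih₂ => exact ih₁.union ih₂
  | hall _ _ ih | hex _ _ ih => exact ih.sdiff

theorem QFree.free_nonempty {φ : HForm AP V} (hq : φ.QFree) : φ.free.Nonempty := by
  induction φ with
  | atom _ v => exact ⟨v, rfl⟩
  | hnot _ ih | hnext _ ih | hglob _ ih => exact ih hq
  | hand _ _ ih₁ _ | hor _ _ ih₁ _ | huntl _ _ ih₁ _ =>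
    exact (ih₁ hq.1).mono Set.subset_union_left
  | hall | hex => exact hq.elim

theorem QFree.rename {φ : HForm AP V} (hq : φ.QFree) (ρ : V → V) : (φ.rename ρ).QFree := by
  induction φ with
  | atom => trivial
  | hnot _ ih | hnext _ ih | hglob _ ih => exact ih hq
  | hand _ _ ih₁ ih₂ | hor _ _ ih₁ ih₂ | huntl _ _ ih₁ ih₂ => exact ⟨ih₁ hq.1, ih₂ hq.2⟩
  | hall | hex => exact hq.elim

theorem QFree.free_rename {φ : HForm AP V} (hq : φ.QFree) (ρ : V → V) :
    (φ.rename ρ).free = ρ '' φ.free := by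
  induction φ with
  | atom => simp [HForm.rename, HForm.free]
  | hnot _ ih | hnext _ ih | hglob _ ih => exact ih hq
  | hand _ _ ih₁ ih₂ | hor _ _ ih₁ ih₂ | huntl _ _ ih₁ ih₂ =>
    simp only [HForm.rename, HForm.free, ih₁ hq.1, ih₂ hq.2, Set.image_union]
  | hall | hex => exact hq.elim

theorem free_foldr_hall (l : List V) (ψ : HForm AP V) :
    (l.foldr .hall ψ).free = ψ.free \ {v | v ∈ l} := by
  induction l with
  | nil => simp
  | cons v l ih =>
    ext w
    simp only [List.foldr_cons, HForm.free, ih, Set.mem_sdiff, Set.mem_ofPred_eq, List.mem_cons,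
      Set.mem_singleton_iff]
    tauto

theorem QFree.isUnivSentence_foldr_hall {ψ : HForm AP V} (hq : ψ.QFree) {l : List V}
    (hl : ψ.free ⊆ {v | v ∈ l}) : IsUnivSentence (l.foldr .hall ψ) :=
  ⟨⟨l, ψ, hq, rfl⟩, by rwa [free_foldr_hall, Set.sdiff_eq_empty]⟩

variable [DecidableEq V]

theorem hsat_congr {A B : V → Trace AP} {T : Set (Trace AP)} (φ : HForm AP V)
    (hAB : Set.EqOn A B φ.free) : φ.hsat A T ↔ φ.hsat B T := by
  have hshift : ∀ {A B : V → Trace AP} {s : Set V} (i : ℕ), Set.EqOn A B s →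
      Set.EqOn (shiftA A i) (shiftA B i) s := fun i h v hv => congrArg (·.shift i) (h hv)
  induction φ generalizing A B with
  | atom a v => simp [HForm.hsat, hAB rfl]
  | hnot _ ih => exact not_congr (ih hAB)
  | hand _ _ ih₁ ih₂ =>
    exact and_congr (ih₁ (hAB.mono Set.subset_union_left)) (ih₂ (hAB.mono Set.subset_union_right))
  | hor _ _ ih₁ ih₂ =>
    exact or_congr (ih₁ (hAB.mono Set.subset_union_left)) (ih₂ (hAB.mono Set.subset_union_right))
  | hnext _ ih => exact ih (hshift 1 hAB)
  | hglob _ ih => exact forall_congr' fun i => ih (hshift i hAB)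
  | huntl _ _ ih₁ ih₂ =>
    exact exists_congr fun i => and_congr (ih₂ (hshift i (hAB.mono Set.subset_union_right)))
      (forall₂_congr fun j _ => ih₁ (hshift j (hAB.mono Set.subset_union_left)))
  | hall _ _ ih => exact forall₂_congr fun t _ => ih (hAB.update_of_sdiff t)
  | hex _ _ ih =>
    exact exists_congr fun t => and_congr_right fun _ => ih (hAB.update_of_sdiff t)

theorem QFree.hsat_rename {φ : HForm AP V} (hq : φ.QFree) (ρ : V → V) (A : V → Trace AP)
    (T : Set (Trace AP)) : (φ.rename ρ).hsat A T ↔ φ.hsat (A ∘ ρ) T := by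
  induction φ generalizing A with
  | atom => rfl
  | hnot _ ih => exact not_congr (ih hq A)
  | hand _ _ ih₁ ih₂ => exact and_congr (ih₁ hq.1 A) (ih₂ hq.2 A)
  | hor _ _ ih₁ ih₂ => exact or_congr (ih₁ hq.1 A) (ih₂ hq.2 A)
  | hnext _ ih => exact ih hq _
  | hglob _ ih => exact forall_congr' fun i => ih hq _
  | huntl _ _ ih₁ ih₂ =>
    exact exists_congr fun i => and_congr (ih₂ hq.2 _) (forall₂_congr fun j _ => ih₁ hq.1 _)
  | hall | hex => exact hq.elim

theorem hsat_foldr_hall (l : List V) (ψ : HForm AP V) (A : V → Trace AP)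
    (T : Set (Trace AP)) :
    (l.foldr .hall ψ).hsat A T ↔
      ∀ B : V → Trace AP, (∀ v ∈ l, B v ∈ T) → (∀ v ∉ l, B v = A v) → ψ.hsat B T := by
  induction l generalizing A with
  | nil =>
    refine ⟨fun h B _ hBA => funext (fun v => hBA v List.not_mem_nil) ▸ h, fun h => h A ?_ ?_⟩
      <;> simp
  | cons u l ih =>
    simp only [List.foldr_cons, HForm.hsat, ih, List.mem_cons, forall_eq_or_imp, not_or]
    constructor
    · intro h B ⟨hBu, hBl⟩ hBA
      refine h (B u) hBu B hBl fun v hv => ?_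
      rcases eq_or_ne v u with rfl | hvu
      · simp
      · simp [Function.update_of_ne hvu, hBA v ⟨hvu, hv⟩]
    · intro h t ht B hBl hBA
      refine h B ⟨?_, hBl⟩ fun v ⟨hvu, hvl⟩ => by simp [hBA v hvl, Function.update_of_ne hvu]
      by_cases hul : u ∈ l
      · exact hBl u hul
      · simpa [hBA u hul] using ht

def ValidOn (T : Set (Trace AP)) (ψ : HForm AP V) : Prop :=
  ∀ B : V → Trace AP, (∀ v, B v ∈ T) → ψ.hsat B T

theorem validOn_hand {T : Set (Trace AP)} {ψ₁ ψ₂ : HForm AP V} :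
    (hand ψ₁ ψ₂).ValidOn T ↔ ψ₁.ValidOn T ∧ ψ₂.ValidOn T :=
  ⟨fun h => ⟨fun B hB => (h B hB).1, fun B hB => (h B hB).2⟩,
    fun h B hB => ⟨h.1 B hB, h.2 B hB⟩⟩

theorem validOn_hor_of_disjoint {T : Set (Trace AP)} {ψ₁ ψ₂ : HForm AP V}
    (hdisj : Disjoint ψ₁.free ψ₂.free) :
    (hor ψ₁ ψ₂).ValidOn T ↔ ψ₁.ValidOn T ∨ ψ₂.ValidOn T := by
  refine ⟨fun h => by_contra fun hne => ?_, fun h B hB => h.imp (· B hB) (· B hB)⟩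
  simp only [not_or, ValidOn, not_forall] at hne
  obtain ⟨⟨B₁, hB₁, h₁⟩, B₂, hB₂, h₂⟩ := hne
  classical
  let B v := if v ∈ ψ₁.free then B₁ v else B₂ v
  have hB : ∀ v, B v ∈ T := fun v => by
    dsimp only [B]
    split_ifs
    exacts [hB₁ v, hB₂ v]
  rcases h B hB with h' | h'
  · exact h₁ ((hsat_congr ψ₁ fun v hv => by simp [B, hv]).1 h')
  · exact h₂ ((hsat_congr ψ₂ fun v hv => by simp [B, hdisj.notMem_of_mem_right hv]).1 h')

theorem QFree.validOn_rename {T : Set (Trace AP)} {ψ : HForm AP V} (hq : ψ.QFree) {ρ : V → V}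
    (hρ : Set.InjOn ρ ψ.free) : (ψ.rename ρ).ValidOn T ↔ ψ.ValidOn T := by
  refine ⟨fun h B hB => ?_, fun h B hB => (hq.hsat_rename ρ B T).2 (h (B ∘ ρ) fun v => hB _)⟩
  have : Nonempty V := ⟨hq.free_nonempty.some⟩
  have h' := (hq.hsat_rename ρ _ T).1 (h (B ∘ ρ.invFunOn ψ.free) fun v => hB _)
  refine (hsat_congr ψ fun v hv => ?_).1 h'
  simp [hρ.leftInvOn_invFunOn hv]

theorem QFree.hsat_foldr_hall_iff_validOn {T : Set (Trace AP)} {ψ : HForm AP V} (hq : ψ.QFree)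
    {l : List V} (hl : ψ.free ⊆ {v | v ∈ l}) (A : V → Trace AP) :
    (l.foldr .hall ψ).hsat A T ↔ ψ.ValidOn T := by
  classical
  rw [hsat_foldr_hall]
  constructor
  · intro h B hB
    refine (hsat_congr ψ fun v hv => ?_).1 (h (fun v => if v ∈ l then B v else A v) ?_ ?_)
    · exact if_pos (hl hv)
    · intro v hv
      simp [hv, hB]
    · intro v hv
      simp [hv]
  · intro h B hB _
    -- `T` is nonempty: `ψ` has a free variable, and `B` sends it into `T`
    obtain ⟨v₀, hv₀⟩ := hq.free_nonempty
    refine (hsat_congr ψ fun v hv => ?_).1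
      (h (fun v => if v ∈ l then B v else B v₀) fun v => ?_)
    · exact if_pos (hl hv)
    · split_ifs with hv
      exacts [hB v hv, hB v₀ (hl hv₀)]

theorem QFree.exists_validOn_iff_or [Infinite V] {ψ₁ ψ₂ : HForm AP V} (hq₁ : ψ₁.QFree)
    (hq₂ : ψ₂.QFree) :
    ∃ ψ : HForm AP V, ψ.QFree ∧ ∀ T, ψ.ValidOn T ↔ ψ₁.ValidOn T ∨ ψ₂.ValidOn T := by
  obtain ⟨ρ, hρ, hinj⟩ := ψ₂.free_finite.exists_injOn_of_encard_le (t := ψ₁.freeᶜ)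
    (by simp [ψ₁.free_finite.infinite_compl])
  have hdisj : Disjoint ψ₁.free (ψ₂.rename ρ).free := by
    rw [hq₂.free_rename]
    exact disjoint_compl_right.mono_right (Set.image_subset_iff.2 hρ)
  refine ⟨hor ψ₁ (ψ₂.rename ρ), ⟨hq₁, hq₂.rename ρ⟩, fun T => ?_⟩
  rw [validOn_hor_of_disjoint hdisj, hq₂.validOn_rename hinj]

end HForm

theorem IsUnivSentence.exists_validOn_iff {AP V : Type} [DecidableEq V] {b : HForm AP V}
    (hb : IsUnivSentence b) :
    ∃ ψ : HForm AP V, ψ.QFree ∧ ∀ T A, b.hsat A T ↔ ψ.ValidOn T := by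
  obtain ⟨⟨l, ψ, hq, rfl⟩, hfree⟩ := hb
  rw [HForm.free_foldr_hall, Set.sdiff_eq_empty] at hfree
  exact ⟨ψ, hq, fun T A => hq.hsat_foldr_hall_iff_validOn hfree A⟩

theorem PBCform.exists_validOn_iff {AP V : Type} [DecidableEq V] [Infinite V]
    (Φ : PBCform AP V) (h : ∀ b ∈ Φ.bases, IsUnivSentence b) :
    ∃ ψ : HForm AP V, ψ.QFree ∧ ∀ T A, Φ.sat A T ↔ ψ.ValidOn T := by
  induction Φ with
  | base b => exact (h b rfl).exists_validOn_iff
  | pand Φ₁ Φ₂ ih₁ ih₂ =>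
    obtain ⟨ψ₁, hq₁, h₁⟩ := ih₁ fun b hb => h b (.inl hb)
    obtain ⟨ψ₂, hq₂, h₂⟩ := ih₂ fun b hb => h b (.inr hb)
    exact ⟨.hand ψ₁ ψ₂, ⟨hq₁, hq₂⟩,
      fun T A => (and_congr (h₁ T A) (h₂ T A)).trans HForm.validOn_hand.symm⟩
  | por Φ₁ Φ₂ ih₁ ih₂ =>
    obtain ⟨ψ₁, hq₁, h₁⟩ := ih₁ fun b hb => h b (.inl hb)
    obtain ⟨ψ₂, hq₂, h₂⟩ := ih₂ fun b hb => h b (.inr hb)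
    obtain ⟨ψ, hq, hψ⟩ := hq₁.exists_validOn_iff_or hq₂
    exact ⟨ψ, hq, fun T A => (or_congr (h₁ T A) (h₂ T A)).trans (hψ T).symm⟩

/-- PBC(∀*HyperLTL) ≡ ∀*HyperLTL. -/
theorem pbc_forall_hyperLTL_collapse {AP V : Type} [DecidableEq V] [Infinite V]
    (Φ : PBCform AP V) (h : ∀ b ∈ Φ.bases, IsUnivSentence b) :
    ∃ ψ : HForm AP V, IsUnivSentence ψ ∧
      ∀ (T : Set (Trace AP)) (A : V → Trace AP), Φ.sat A T ↔ HForm.hsat A T ψ := by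
  obtain ⟨ψ, hq, hΦ⟩ := Φ.exists_validOn_iff h
  let l := ψ.free_finite.toFinset.toList
  have hl : ψ.free ⊆ {v | v ∈ l} := fun v hv => by simpa [l] using hv
  exact ⟨l.foldr .hall ψ, hq.isUnivSentence_foldr_hall hl,
    fun T A => (hΦ T A).trans (hq.hsat_foldr_hall_iff_validOn hl A).symm⟩
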